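/- Chain rule, second-order vertical derivatives: In the setting of the chain rule (F_1,…,F_ν∈ℂ^{1,2}_c(U,S) with F(t,X,A)=(F_1,…,F_ν)(t,X,A)∈V for all arguments, G∈ℂ^{1,2}_c(V,W), and H(t,X,(A,B))=G(t,F(·,X,A),B)), the second vertical derivatives of H are given, for i,j=1,…,d, by ∂_{ji}H(t,X,(A,B)) = Σ_{ℓ=1}^{ν} ( Σ_{k=1}^{ν} ∂_{ℓk}G(t,F(·,X,A),B) ∂_iF_ℓ(t,X,A) ∂_jF_k(t,X,A) + ∂_ℓG(t,F(·,X,A),B) ∂_{ji}F_ℓ(t,X,A) ). -/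

import Mathlib

open Filter Set MeasureTheory

noncomputable section

/-- A `d`-dimensional path, i.e. a function from time to `ℝ^d`. -/
abbrev FPath (d : ℕ) := ℝ → (Fin d → ℝ)

/-- A non-anticipative functional type: depends on time, a `d`-dimensional path and an
`m`-dimensional (bounded-variation) path. -/
abbrev Fnl (d m : ℕ) := ℝ → FPath d → FPath m → ℝ

/-- The path `X` stopped at time `t`: `X^t(s) = X(t ∧ s)`. -/
def stopped {d : ℕ} (X : FPath d) (t : ℝ) : FPath d := fun s => X (min t s)

/-- Supremum distance `‖X - Y‖_∞ = sup_{u ∈ [0,T]} |X(u) - Y(u)|`. -/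
noncomputable def supDist {d : ℕ} (T : ℝ) (X Y : FPath d) : ℝ :=
  ⨆ u : Set.Icc (0:ℝ) T, ‖X u.1 - Y u.1‖

/-- `X ∈ D([0,T],U)`: càdlàg on `[0,T]` with values in `U` and left limits in `U`. -/
def IsCadlag {d : ℕ} (T : ℝ) (U : Set (Fin d → ℝ)) (X : FPath d) : Prop :=
  (∀ t ∈ Set.Icc (0:ℝ) T, X t ∈ U) ∧
  (∀ t ∈ Set.Ico (0:ℝ) T, Tendsto X (nhdsWithin t (Set.Ioi t)) (nhds (X t))) ∧
  (∀ t ∈ Set.Ioc (0:ℝ) T, ∃ L ∈ U, Tendsto X (nhdsWithin t (Set.Iio t)) (nhds L))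

/-- `A ∈ CBV([0,T],S)`: continuous, `S`-valued, components of bounded variation on `[0,T]`. -/
def IsCBV {m : ℕ} (T : ℝ) (S : Set (Fin m → ℝ)) (A : FPath m) : Prop :=
  (∀ t ∈ Set.Icc (0:ℝ) T, A t ∈ S) ∧ ContinuousOn A (Set.Icc 0 T) ∧
  (∀ i, BoundedVariationOn (fun t => A t i) (Set.Icc 0 T))

/-- `X ∈ C([0,T],U)`: a continuous path (in particular càdlàg). -/
def IsContPath {d : ℕ} (T : ℝ) (U : Set (Fin d → ℝ)) (X : FPath d) : Prop :=
  IsCadlag T U X ∧ ContinuousOn X (Set.Icc 0 T)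

/-- `I` is the Lebesgue–Stieltjes integral `∫_s^t g(r) dA(r)` of `g` against the (continuous,
bounded-variation) integrator `A`, via a Jordan-type decomposition `A = P - N` into monotone
right-continuous parts. -/
def IsLSIntegral (g : ℝ → ℝ) (A : ℝ → ℝ) (s t : ℝ) (I : ℝ) : Prop :=
  ∃ P N : StieltjesFunction ℝ,
    (∀ r ∈ Set.Icc s t, A r = P r - N r) ∧
    IntervalIntegrable g P.measure s t ∧ IntervalIntegrable g N.measure s t ∧
    I = (∫ r in s..t, g r ∂P.measure) - (∫ r in s..t, g r ∂N.measure)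

/-- Non-anticipativity: `F(t,X,A) = F(t,X^t,A^t)`. -/
def NonAnticipative {d m : ℕ} (T : ℝ) (U : Set (Fin d → ℝ)) (S : Set (Fin m → ℝ))
    (F : Fnl d m) : Prop :=
  ∀ t ∈ Set.Icc (0:ℝ) T, ∀ X, IsCadlag T U X → ∀ A, IsCBV T S A →
    F t X A = F t (stopped X t) (stopped A t)

/-- Boundedness-preserving functional. -/
def BoundednessPreserving {d m : ℕ} (T : ℝ) (U : Set (Fin d → ℝ)) (S : Set (Fin m → ℝ))
    (F : Fnl d m) : Prop :=
  ∀ A, IsCBV T S A → ∀ K : Set (Fin d → ℝ), K ⊆ U → IsCompact K →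
    ∃ C : ℝ, ∀ t ∈ Set.Icc (0:ℝ) T, ∀ X, IsCadlag T K X → |F t X A| ≤ C

/-- Continuity at fixed times. -/
def ContAtFixedTimes {d m : ℕ} (T : ℝ) (U : Set (Fin d → ℝ)) (S : Set (Fin m → ℝ))
    (F : Fnl d m) : Prop :=
  ∀ ε > (0:ℝ), ∀ t ∈ Set.Icc (0:ℝ) T, ∀ X, IsCadlag T U X → ∀ A, IsCBV T S A →
    ∃ η > (0:ℝ), ∀ Y, IsCadlag T U Y → supDist T (stopped X t) (stopped Y t) < η →
      |F t X A - F t Y A| < ε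

/-- Left-continuity of a non-anticipative functional. -/
def LeftCont {d m : ℕ} (T : ℝ) (U : Set (Fin d → ℝ)) (S : Set (Fin m → ℝ))
    (F : Fnl d m) : Prop :=
  ∀ t ∈ Set.Ioc (0:ℝ) T, ∀ ε > (0:ℝ), ∀ X, IsCadlag T U X → ∀ A, IsCBV T S A →
    ∃ η > (0:ℝ), ∀ h ∈ Set.Ico (0:ℝ) η, ∀ Y, IsCadlag T U Y →
      supDist T (stopped X t) (stopped Y (t - h)) < η →
      |F t X A - F (t - h) Y A| < ε

/-- Continuity in `X` locally uniformly in `t`. -/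
def ContInXLocUnifT {d m : ℕ} (T : ℝ) (U : Set (Fin d → ℝ)) (S : Set (Fin m → ℝ))
    (F : Fnl d m) : Prop :=
  ∀ ε > (0:ℝ), ∀ t ∈ Set.Icc (0:ℝ) T, ∀ X, IsCadlag T U X → ∀ A, IsCBV T S A →
    ∃ η > (0:ℝ), ∀ u ∈ Set.Icc (0:ℝ) T, ∀ Y, IsCadlag T U Y →
      supDist T X Y < η → |t - u| < η → |F u X A - F u Y A| < ε

/-- Vertical perturbation `X + v·1_{[t,∞)}`. -/
def vertPerturb {d : ℕ} (t : ℝ) (X : FPath d) (v : Fin d → ℝ) : FPath d :=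
  fun s => if t ≤ s then X s + v else X s

/-- Vertical differentiability of `F` at `(t,X,A)`. -/
def VertDiffAt {d m : ℕ} (F : Fnl d m) (t : ℝ) (X : FPath d) (A : FPath m) : Prop :=
  DifferentiableAt ℝ (fun v : Fin d → ℝ => F t (vertPerturb t X v) A) 0

/-- The vertical derivative `∇_X F(t,X,A)` (components `∂_i F`). -/
noncomputable def vertD {d m : ℕ} (F : Fnl d m) (t : ℝ) (X : FPath d) (A : FPath m) :
    Fin d → ℝ :=
  fun i => fderiv ℝ (fun v : Fin d → ℝ => F t (vertPerturb t X v) A) 0 (Pi.single i 1)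

/-- Second vertical derivatives `∂_{ij}F = ∂_i(∂_j F)`. -/
noncomputable def vertD2 {d m : ℕ} (F : Fnl d m) (t : ℝ) (X : FPath d) (A : FPath m) :
    Fin d → Fin d → ℝ :=
  fun i j => vertD (fun u Y B => vertD F u Y B j) t X A i

/-- The time-augmented bounded-variation path `(A_0, A_1, …, A_m)` with `A_0(r) = r`. -/
def timeAug {m : ℕ} (A : FPath m) : ℝ → Fin (m+1) → ℝ := fun r => Fin.cons r (A r)

/-- `F` is horizontally differentiable with horizontal derivative `HD = (𝒟_0F, …, 𝒟_mF)`. -/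
def HasHorizDeriv {d m : ℕ} (T : ℝ) (U : Set (Fin d → ℝ)) (S : Set (Fin m → ℝ))
    (F : Fnl d m) (HD : Fin (m+1) → Fnl d m) : Prop :=
  (∀ i, NonAnticipative T U S (HD i)) ∧
  (∀ i, BoundednessPreserving T U S (HD i)) ∧
  (∀ s t : ℝ, 0 ≤ s → s < t → t ≤ T → ∀ X, IsCadlag T U X → ∀ A, IsCBV T S A →
    (∀ i, Measurable fun r : Set.Icc s t => HD i r.1 (stopped X s) A) ∧
    ∃ I : Fin (m+1) → ℝ,
      (∀ i, IsLSIntegral (fun r => HD i r (stopped X s) A) (fun r => timeAug A r i) s t (I i)) ∧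
      F t (stopped X s) A - F s (stopped X s) A = ∑ i, I i)

/-- The class `ℂ^{1,2}_b(U,S)`. -/
structure C12b {d m : ℕ} (T : ℝ) (U : Set (Fin d → ℝ)) (S : Set (Fin m → ℝ))
    (F : Fnl d m) : Prop where
  nonanticip : NonAnticipative T U S F
  leftCont : LeftCont T U S F
  horiz : ∃ HD : Fin (m+1) → Fnl d m,
    HasHorizDeriv T U S F HD ∧ ∀ i, ContAtFixedTimes T U S (HD i)
  vdiff : ∀ t ∈ Set.Icc (0:ℝ) T, ∀ X, IsCadlag T U X → ∀ A, IsCBV T S A → VertDiffAt F t X A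
  vdiff2 : ∀ j : Fin d, ∀ t ∈ Set.Icc (0:ℝ) T, ∀ X, IsCadlag T U X → ∀ A, IsCBV T S A →
    VertDiffAt (fun u Y B => vertD F u Y B j) t X A
  vd_leftCont : ∀ i, LeftCont T U S (fun u Y B => vertD F u Y B i)
  vd_bdd : ∀ i, BoundednessPreserving T U S (fun u Y B => vertD F u Y B i)
  vd2_leftCont : ∀ i j, LeftCont T U S (fun u Y B => vertD2 F u Y B i j)
  vd2_bdd : ∀ i j, BoundednessPreserving T U S (fun u Y B => vertD2 F u Y B i j)

/-- The class `ℂ^{1,2}_c(U,S)`. -/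
def C12c {d m : ℕ} (T : ℝ) (U : Set (Fin d → ℝ)) (S : Set (Fin m → ℝ)) (F : Fnl d m) : Prop :=
  C12b T U S F ∧ ContInXLocUnifT T U S F ∧ BoundednessPreserving T U S F

/-- The successor `s'` of `s` in the partition `P` of `[0,T]`. -/
noncomputable def nextPt (P : Finset ℝ) (T s : ℝ) : ℝ :=
  if h : (P.filter (fun u => s < u)).Nonempty then (P.filter (fun u => s < u)).min' h else T

/-- The largest partition point `≤ t`. -/
noncomputable def prevPt (P : Finset ℝ) (t : ℝ) : ℝ :=
  if h : (P.filter (fun u => u ≤ t)).Nonempty then (P.filter (fun u => u ≤ t)).max' h else 0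

/-- The step-path approximation `X^n(t) = Σ_{s ∈ T_n} X(s')1_{[s,s')}(t) + X(T)1_{{T}}(t)`. -/
noncomputable def stepApprox {d : ℕ} (P : Finset ℝ) (T : ℝ) (X : FPath d) : FPath d :=
  fun t => if t = T then X T else X (nextPt P T (prevPt P t))

/-- `X^{n,s-} = lim_{r ↑ s} (X^n)^r`: equals `X^n` before `s` and `X(s)` from `s` on. -/
noncomputable def stepStopApprox {d : ℕ} (P : Finset ℝ) (T : ℝ) (X : FPath d) (s : ℝ) : FPath d :=
  fun u => if u < s then stepApprox P T X u else X s

/-- A refining sequence of partitions of `[0,T]`: nested, containing `0` and `T`,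
with mesh tending to zero. -/
structure RefiningSeq (T : ℝ) where
  part : ℕ → Finset ℝ
  subset_Icc : ∀ n, (part n : Set ℝ) ⊆ Set.Icc (0:ℝ) T
  zero_mem : ∀ n, (0:ℝ) ∈ part n
  endpoint_mem : ∀ n, T ∈ part n
  nested : ∀ n, part n ⊆ part (n+1)
  mesh_to_zero : ∀ ε > (0:ℝ), ∃ N, ∀ n ≥ N, ∀ s ∈ part n, nextPt (part n) T s - s < ε

/-- The approximating Itô–Riemann sum `Σ_{s ∈ P, s ≤ t} ξ(s, X^{n,s-})·(X(s') - X(s))`. -/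
noncomputable def itoSum {d : ℕ} (P : Finset ℝ) (T : ℝ) (ξ : ℝ → FPath d → Fin d → ℝ)
    (X : FPath d) (t : ℝ) : ℝ :=
  ∑ s ∈ P.filter (fun u => u ≤ t),
    ∑ i, ξ s (stepStopApprox P T X s) i * (X (nextPt P T s) i - X s i)

/-- `I = ∫_0^t ξ(s,X) dX(s)`, the pathwise Itô integral along the refining sequence `R`. -/
def IsItoIntegral {d : ℕ} {T : ℝ} (R : RefiningSeq T) (ξ : ℝ → FPath d → Fin d → ℝ)
    (X : FPath d) (t : ℝ) (I : ℝ) : Prop :=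
  Tendsto (fun n => itoSum (R.part n) T ξ X t) atTop (nhds I)

/-- A one-dimensional path `Z` admits the continuous quadratic variation `Q` along `R`. -/
def HasQV1 {T : ℝ} (R : RefiningSeq T) (Z : ℝ → ℝ) (Q : ℝ → ℝ) : Prop :=
  Q 0 = 0 ∧ ContinuousOn Q (Set.Icc 0 T) ∧
  ∀ t ∈ Set.Ioc (0:ℝ) T,
    Tendsto (fun n => ∑ s ∈ (R.part n).filter (fun u => u ≤ t),
      (Z (nextPt (R.part n) T s) - Z s)^2) atTop (nhds (Q t))

/-- `Q = [Z_i, Z_j]` is the covariation of `Z_i` and `Z_j` along `R`, via polarization. -/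
def IsCovar {T : ℝ} (R : RefiningSeq T) (Zi Zj : ℝ → ℝ) (Q : ℝ → ℝ) : Prop :=
  ∃ Qi Qj Qij : ℝ → ℝ, HasQV1 R Zi Qi ∧ HasQV1 R Zj Qj ∧
    HasQV1 R (fun s => Zi s + Zj s) Qij ∧
    ∀ t ∈ Set.Icc (0:ℝ) T, Q t = (Qij t - Qi t - Qj t) / 2

/-- A `d`-dimensional path admits the continuous quadratic variation along `R`. -/
def HasContQV {d : ℕ} {T : ℝ} (R : RefiningSeq T) (X : FPath d) : Prop :=
  ∀ i j : Fin d, ∃ Q, HasQV1 R (fun s => X s i + X s j) Q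

/-- An admissible functional integrand: `ξ(t,X) = ∇_X F(t,X,A)` for some
`F ∈ ℂ^{1,2}_c(U,S)` and `A ∈ CBV([0,T],S)`. -/
def AdmissibleIntegrand {d : ℕ} (T : ℝ) (U : Set (Fin d → ℝ))
    (ξ : ℝ → FPath d → Fin d → ℝ) : Prop :=
  ∃ (m : ℕ) (S : Set (Fin m → ℝ)) (A : FPath m) (F : Fnl d m),
    IsOpen S ∧ IsCBV T S A ∧ C12c T U S F ∧
    ∀ t ∈ Set.Icc (0:ℝ) T, ∀ X, IsCadlag T U X → ξ t X = vertD F t X A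

/-- The set `S × W ⊆ ℝ^{m+p}`. -/
def pairSet {m p : ℕ} (S : Set (Fin m → ℝ)) (W : Set (Fin p → ℝ)) : Set (Fin (m+p) → ℝ) :=
  {v | (fun i => v (Fin.castAdd p i)) ∈ S ∧ (fun j => v (Fin.natAdd m j)) ∈ W}

/-- First component of a combined path `(A,B)`. -/
def fstPath {m p : ℕ} (AB : FPath (m+p)) : FPath m := fun r i => AB r (Fin.castAdd p i)

/-- Second component of a combined path `(A,B)`. -/
def sndPath {m p : ℕ} (AB : FPath (m+p)) : FPath p := fun r j => AB r (Fin.natAdd m j)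

end

/-!
A vertical bump `v` of `X` at time `t` moves the path `Y = F(·, X, A)` only from time `t` on, and
the non-anticipative `G` evaluated at time `t` sees the bumped path only through its value
`F(t, X + v 1_{[t,T]}, A)`. Hence, near `v = 0`, `v ↦ H(t, X + v 1_{[t,T]}, (A, B))` is the
composition of `q(v) = F(t, X + v 1_{[t,T]}, A) - F(t, X, A)` with `y ↦ G(t, Y + y 1_{[t,T]}, B)`,
and the formula is the classical second-order chain rule together with the symmetry of the
second vertical derivatives of `G`.

The hypotheses on `G` apply at `Y` only once `Y` is known to be càdlàg with values in `V`: its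
right-continuity comes from the horizontal derivative of `F` (Stieltjes integrals over shrinking
intervals) and the continuity of `F` in `X`, its left limits from the left-continuity of `F`.
-/

open Filter Set MeasureTheory Topology

section Calculus

variable {ι : Type*} [Fintype ι] [DecidableEq ι]

lemma ContinuousLinearMap.apply_eq_sum_single {M : Type*} [AddCommMonoid M] [Module ℝ M]
    [TopologicalSpace M] (L : (ι → ℝ) →L[ℝ] M) (w : ι → ℝ) :
    L w = ∑ k, w k • L (Pi.single k 1) := by
  conv_lhs => rw [← Finset.univ_sum_single w, map_sum]
  refine Finset.sum_congr rfl fun k _ => ?_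
  rw [← L.map_smul, ← Pi.single_smul, smul_eq_mul, mul_one]

variable {E : Type*} [NormedAddCommGroup E] [NormedSpace ℝ E]

lemma differentiableAt_of_differentiableAt_apply_single {L : E → (ι → ℝ) →L[ℝ] ℝ} {x : E}
    (h : ∀ k, DifferentiableAt ℝ (fun y => L y (Pi.single k 1)) x) : DifferentiableAt ℝ L x := by
  have hL : L = fun y => ∑ k, L y (Pi.single k 1) • ContinuousLinearMap.proj (R := ℝ) k := by
    ext y w
    simp [(L y).apply_eq_sum_single w, mul_comm]
  rw [hL]
  exact DifferentiableAt.fun_sum fun k _ => (h k).smul_const _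

lemma fderiv_apply_single_comm {g : (ι → ℝ) → ℝ} {y : ι → ℝ}
    (hg : ∀ᶠ z in 𝓝 y, DifferentiableAt ℝ g z)
    (hg2 : ∀ k, DifferentiableAt ℝ (fun z => fderiv ℝ g z (Pi.single k 1)) y) (k ℓ : ι) :
    fderiv ℝ (fun z => fderiv ℝ g z (Pi.single k 1)) y (Pi.single ℓ 1)
      = fderiv ℝ (fun z => fderiv ℝ g z (Pi.single ℓ 1)) y (Pi.single k 1) := by
  have hg' : DifferentiableAt ℝ (fderiv ℝ g) y :=
    differentiableAt_of_differentiableAt_apply_single hg2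
  have partial_eq : ∀ a b : ι → ℝ,
      fderiv ℝ (fun z => fderiv ℝ g z b) y a = fderiv ℝ (fderiv ℝ g) y a b := by
    intro a b
    rw [fderiv_clm_apply hg' (differentiableAt_const b)]
    simp
  rw [partial_eq, partial_eq]
  exact second_derivative_symmetric_of_eventually (hg.mono fun z hz => hz.hasFDerivAt)
    hg'.hasFDerivAt _ _

variable {κ : Type*} [Fintype κ] [DecidableEq κ]

lemma fderiv_comp_apply_single_eq_sum {p : (ι → ℝ) → κ → ℝ} {g : (κ → ℝ) → ℝ} {v : ι → ℝ}
    (hp : DifferentiableAt ℝ p v) (hg : DifferentiableAt ℝ g (p v)) (i : ι) :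
    fderiv ℝ (fun w => g (p w)) v (Pi.single i 1)
      = ∑ k, fderiv ℝ g (p v) (Pi.single k 1) * fderiv ℝ (fun w => p w k) v (Pi.single i 1) := by
  rw [fderiv_fun_comp v hg hp, ContinuousLinearMap.comp_apply,
    ContinuousLinearMap.apply_eq_sum_single]
  refine Finset.sum_congr rfl fun k _ => ?_
  rw [fderiv_apply hp k, smul_eq_mul, mul_comm]
  rfl

theorem fderiv_fderiv_comp_apply_single {p : (ι → ℝ) → κ → ℝ} {g : (κ → ℝ) → ℝ} {x : ι → ℝ}
    (hp : ∀ᶠ v in 𝓝 x, DifferentiableAt ℝ p v)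
    (hp2 : ∀ ℓ i, DifferentiableAt ℝ (fun v => fderiv ℝ (fun w => p w ℓ) v (Pi.single i 1)) x)
    (hg : ∀ᶠ y in 𝓝 (p x), DifferentiableAt ℝ g y)
    (hg2 : ∀ k, DifferentiableAt ℝ (fun y => fderiv ℝ g y (Pi.single k 1)) (p x)) (i j : ι) :
    fderiv ℝ (fun v => fderiv ℝ (fun w => g (p w)) v (Pi.single i 1)) x (Pi.single j 1)
      = ∑ ℓ, ((∑ k, fderiv ℝ (fun y => fderiv ℝ g y (Pi.single k 1)) (p x) (Pi.single ℓ 1)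
            * fderiv ℝ (fun w => p w ℓ) x (Pi.single i 1)
            * fderiv ℝ (fun w => p w k) x (Pi.single j 1))
          + fderiv ℝ g (p x) (Pi.single ℓ 1)
            * fderiv ℝ (fun v => fderiv ℝ (fun w => p w ℓ) v (Pi.single i 1)) x
                (Pi.single j 1)) := by
  have hpx : DifferentiableAt ℝ p x := hp.self_of_nhds
  have first_partial : (fun v => fderiv ℝ (fun w => g (p w)) v (Pi.single i 1)) =ᶠ[𝓝 x]
      fun v => ∑ k, fderiv ℝ g (p v) (Pi.single k 1)
        * fderiv ℝ (fun w => p w k) v (Pi.single i 1) := by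
    filter_upwards [hp, hpx.continuousAt.tendsto.eventually hg] with v hpv hgv
    exact fderiv_comp_apply_single_eq_sum hpv hgv i
  have hsum := HasFDerivAt.fun_sum (u := Finset.univ) fun k _ =>
    HasFDerivAt.fun_mul (c := fun v => fderiv ℝ g (p v) (Pi.single k 1))
      ((hg2 k).hasFDerivAt.comp x hpx.hasFDerivAt) (hp2 k i).hasFDerivAt
  rw [first_partial.fderiv_eq, hsum.fderiv]
  simp only [sum_apply, add_apply, smul_apply, ContinuousLinearMap.comp_apply, smul_eq_mul]
  have hessian_apply : ∀ k, fderiv ℝ (fun y => fderiv ℝ g y (Pi.single k 1)) (p x)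
      (fderiv ℝ p x (Pi.single j 1)) = ∑ ℓ, fderiv ℝ (fun w => p w ℓ) x (Pi.single j 1)
        * fderiv ℝ (fun y => fderiv ℝ g y (Pi.single ℓ 1)) (p x) (Pi.single k 1) := by
    intro k
    rw [ContinuousLinearMap.apply_eq_sum_single]
    refine Finset.sum_congr rfl fun ℓ _ => ?_
    rw [fderiv_apply hpx ℓ, fderiv_apply_single_comm hg hg2 k ℓ, smul_eq_mul]
    rfl
  simp only [hessian_apply, Finset.sum_add_distrib, Finset.mul_sum]
  rw [add_comm]
  congr 1
  exact Finset.sum_congr rfl fun ℓ _ => Finset.sum_congr rfl fun k _ => by ring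

end Calculus

section VerticalPerturbation

variable {d m : ℕ}

lemma vertPerturb_zero (t : ℝ) (X : FPath d) : vertPerturb t X 0 = X := by
  funext s
  simp [vertPerturb]

lemma vertPerturb_vertPerturb (t : ℝ) (X : FPath d) (v w : Fin d → ℝ) :
    vertPerturb t (vertPerturb t X v) w = vertPerturb t X (v + w) := by
  funext s
  simp only [vertPerturb]
  split_ifs <;> simp [add_assoc]

lemma vertPerturb_eq_ite (t : ℝ) (X : FPath d) (v : Fin d → ℝ) :
    vertPerturb t X v = fun s => if s < t then X s else X s + v := by
  funext s
  simp only [vertPerturb, ← not_lt, ite_not]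

lemma stopped_vertPerturb_of_lt {t s : ℝ} (hst : s < t) (X : FPath d) (v : Fin d → ℝ) :
    stopped (vertPerturb t X v) s = stopped X s := by
  funext r
  simp only [stopped, vertPerturb, if_neg (not_le.2 ((min_le_left s r).trans_lt hst))]

lemma vertDiffAt_vertPerturb_iff (F : Fnl d m) (t : ℝ) (X : FPath d) (A : FPath m)
    (v : Fin d → ℝ) :
    VertDiffAt F t (vertPerturb t X v) A
      ↔ DifferentiableAt ℝ (fun w => F t (vertPerturb t X w) A) v := by
  simp only [VertDiffAt, vertPerturb_vertPerturb]
  simpa using differentiableAt_comp_add_left (f := fun w => F t (vertPerturb t X w) A) v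
    (x := 0)

lemma vertD_vertPerturb (F : Fnl d m) (t : ℝ) (X : FPath d) (A : FPath m) (v : Fin d → ℝ)
    (i : Fin d) :
    vertD F t (vertPerturb t X v) A i
      = fderiv ℝ (fun w => F t (vertPerturb t X w) A) v (Pi.single i 1) := by
  simp only [vertD, vertPerturb_vertPerturb]
  rw [fderiv_comp_add_left (𝕜 := ℝ) (f := fun w => F t (vertPerturb t X w) A) v, add_zero]

lemma vertD2_eq_fderiv_fderiv (F : Fnl d m) (t : ℝ) (X : FPath d) (A : FPath m) (i j : Fin d) :
    vertD2 F t X A i j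
      = fderiv ℝ (fun v => fderiv ℝ (fun w => F t (vertPerturb t X w) A) v (Pi.single j 1)) 0
          (Pi.single i 1) := by
  show fderiv ℝ (fun v => vertD F t (vertPerturb t X v) A j) 0 (Pi.single i 1) = _
  simp only [vertD_vertPerturb]

end VerticalPerturbation

section Cadlag

variable {d : ℕ} {T : ℝ} {U K : Set (Fin d → ℝ)} {X Z : FPath d}

lemma isCadlag_const {c : Fin d → ℝ} (hc : c ∈ U) : IsCadlag T U (fun _ => c) :=
  ⟨fun _ _ => hc, fun _ _ => tendsto_const_nhds, fun _ _ => ⟨c, hc, tendsto_const_nhds⟩⟩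

lemma IsCadlag.add_const (hX : IsCadlag T K X) {v : Fin d → ℝ} (hv : ∀ x ∈ K, x + v ∈ U) :
    IsCadlag T U (fun s => X s + v) :=
  ⟨fun s hs => hv _ (hX.1 s hs), fun s hs => (hX.2.1 s hs).add_const v,
    fun s hs => (hX.2.2 s hs).elim fun L hL => ⟨L + v, hv L hL.1, hL.2.add_const v⟩⟩

lemma IsCadlag.piecewise (hX : IsCadlag T U X) (hZ : IsCadlag T U Z) (u : ℝ) :
    IsCadlag T U (fun s => if s < u then X s else Z s) := by
  refine ⟨fun s hs => ?_, fun s hs => ?_, fun s hs => ?_⟩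
  · dsimp only
    split_ifs
    exacts [hX.1 s hs, hZ.1 s hs]
  · rcases lt_or_ge s u with hsu | hus
    · have hXY : X =ᶠ[𝓝[>] s] fun r => if r < u then X r else Z r :=
        eventually_of_mem (Ioo_mem_nhdsGT hsu) fun r hr => (if_pos hr.2).symm
      simpa only [if_pos hsu] using (hX.2.1 s hs).congr' hXY
    · have hZY : Z =ᶠ[𝓝[>] s] fun r => if r < u then X r else Z r :=
        eventually_nhdsWithin_of_forall fun r (hr : s < r) =>
          (if_neg (not_lt.2 (hus.trans hr.le))).symm
      simpa only [if_neg (not_lt.2 hus)] using (hZ.2.1 s hs).congr' hZY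
  · rcases le_or_gt s u with hsu | hus
    · obtain ⟨L, hL, hXL⟩ := hX.2.2 s hs
      exact ⟨L, hL, hXL.congr' (eventually_nhdsWithin_of_forall fun r (hr : r < s) =>
        (if_pos (hr.trans_le hsu)).symm)⟩
    · obtain ⟨L, hL, hZL⟩ := hZ.2.2 s hs
      exact ⟨L, hL, hZL.congr' (eventually_of_mem (Ioo_mem_nhdsLT hus) fun r hr =>
        (if_neg (not_lt.2 hr.1.le)).symm)⟩

lemma stopped_eq_ite (X : FPath d) (u : ℝ) :
    stopped X u = fun s => if s < u then X s else X u := by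
  funext s
  simp only [stopped]
  split_ifs with h
  · rw [min_eq_right h.le]
  · rw [min_eq_left (not_lt.1 h)]

lemma stopped_stopped (X : FPath d) (u : ℝ) : stopped (stopped X u) u = stopped X u := by
  funext s
  simp only [stopped, ← min_assoc, min_self]

lemma IsCadlag.stopped (hX : IsCadlag T U X) {u : ℝ} (hu : u ∈ Icc 0 T) :
    IsCadlag T U (stopped X u) := by
  rw [stopped_eq_ite]
  exact hX.piecewise (isCadlag_const (hX.1 u hu)) u

/-- The stopped path `X^{u-}` when `L` is the left limit `X(u-)`. -/
noncomputable def leftStopped (X : FPath d) (u : ℝ) (L : Fin d → ℝ) : FPath d :=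
  fun s => if s < u then X s else L

lemma IsCadlag.leftStopped (hX : IsCadlag T U X) (u : ℝ) {L : Fin d → ℝ} (hL : L ∈ U) :
    IsCadlag T U (leftStopped X u L) :=
  hX.piecewise (isCadlag_const hL) u

lemma IsCadlag.exists_tendsto_subseq (hX : IsCadlag T U X) {s : ℕ → ℝ}
    (hs : ∀ n, s n ∈ Icc 0 T) :
    ∃ z ∈ U, ∃ φ : ℕ → ℕ, StrictMono φ ∧ Tendsto (fun n => X (s (φ n))) atTop (𝓝 z) := by
  obtain ⟨a, ha, φ, hφ, hsa⟩ := isCompact_Icc.tendsto_subseq hs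
  have htri : ∃ᶠ n in atTop, s (φ n) < a ∨ s (φ n) = a ∨ a < s (φ n) :=
    Eventually.frequently (Eventually.of_forall fun n => lt_trichotomy _ _)
  simp only [frequently_or_distrib] at htri
  rcases htri with hlt | heq | hgt
  · obtain ⟨ψ, hψ, hP⟩ := extraction_of_frequently_atTop hlt
    obtain ⟨L, hL, hXL⟩ := hX.2.2 a ⟨(hs _).1.trans_lt (hP 0), ha.2⟩
    refine ⟨L, hL, φ ∘ ψ, hφ.comp hψ, hXL.comp ?_⟩
    exact tendsto_nhdsWithin_iff.2 ⟨hsa.comp hψ.tendsto_atTop, Eventually.of_forall hP⟩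
  · obtain ⟨ψ, hψ, hP⟩ := extraction_of_frequently_atTop heq
    refine ⟨X a, hX.1 a ha, φ ∘ ψ, hφ.comp hψ, ?_⟩
    simp only [Function.comp_apply, hP, tendsto_const_nhds]
  · obtain ⟨ψ, hψ, hP⟩ := extraction_of_frequently_atTop hgt
    refine ⟨X a, hX.1 a ha, φ ∘ ψ, hφ.comp hψ, (hX.2.1 a ⟨ha.1, (hP 0).trans_le (hs _).2⟩).comp ?_⟩
    exact tendsto_nhdsWithin_iff.2 ⟨hsa.comp hψ.tendsto_atTop, Eventually.of_forall hP⟩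

lemma IsCadlag.closure_image_subset (hX : IsCadlag T U X) : closure (X '' Icc 0 T) ⊆ U := by
  intro z hz
  obtain ⟨x, hx, hxz⟩ := mem_closure_iff_seq_limit.1 hz
  choose s hs hXs using hx
  obtain ⟨z', hz', φ, hφ, hlim⟩ := hX.exists_tendsto_subseq hs
  have hlim' : Tendsto (fun n => X (s (φ n))) atTop (𝓝 z) := by
    simpa only [Function.comp_def, hXs] using hxz.comp hφ.tendsto_atTop
  rwa [tendsto_nhds_unique hlim' hlim]

lemma IsCadlag.isCompact_closure_image (hX : IsCadlag T U X) :
    IsCompact (closure (X '' Icc 0 T)) := by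
  refine Bornology.IsBounded.isCompact_closure ?_
  by_contra hunb
  simp only [isBounded_iff_forall_norm_le, not_exists, not_forall, not_le, exists_prop,
    mem_image, exists_exists_and_eq_and] at hunb
  choose s hs hXs using fun n : ℕ => hunb n
  obtain ⟨z, -, φ, hφ, hlim⟩ := hX.exists_tendsto_subseq hs
  have hnorm : Tendsto (fun n => ‖X (s (φ n))‖) atTop atTop :=
    tendsto_atTop_mono (fun n => (Nat.cast_le.2 (hφ.id_le n)).trans (hXs (φ n)).le)
      tendsto_natCast_atTop_atTop
  exact not_tendsto_atTop_of_tendsto_nhds hlim.norm hnorm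

lemma IsCadlag.to_closure_image (hX : IsCadlag T U X) :
    IsCadlag T (closure (X '' Icc 0 T)) X := by
  refine ⟨fun s hs => subset_closure (mem_image_of_mem X hs), hX.2.1, fun s hs => ?_⟩
  obtain ⟨L, -, hL⟩ := hX.2.2 s hs
  refine ⟨L, mem_closure_of_tendsto hL ?_, hL⟩
  filter_upwards [Ioo_mem_nhdsLT hs.1] with r hr
  exact mem_image_of_mem X ⟨hr.1.le, hr.2.le.trans hs.2⟩

lemma IsCadlag.eventually_vertPerturb (hU : IsOpen U) (hX : IsCadlag T U X) (t : ℝ) :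
    ∀ᶠ v in 𝓝 0, IsCadlag T U (vertPerturb t X v) := by
  obtain ⟨δ, hδ, hthick⟩ :=
    hX.isCompact_closure_image.exists_thickening_subset_open hU hX.closure_image_subset
  filter_upwards [Metric.ball_mem_nhds 0 hδ] with v hv
  rw [vertPerturb_eq_ite]
  refine hX.piecewise (hX.to_closure_image.add_const fun x hx => hthick ?_) t
  exact Metric.mem_thickening_iff.2 ⟨x, hx, by simpa [dist_eq_norm] using hv⟩

end Cadlag

section PairedPaths

variable {m p : ℕ} {T : ℝ} {S : Set (Fin m → ℝ)} {W : Set (Fin p → ℝ)} {AB : FPath (m + p)}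

lemma IsCBV.fstPath (h : IsCBV T (pairSet S W) AB) : IsCBV T S (fstPath AB) :=
  ⟨fun t ht => (h.1 t ht).1,
    continuousOn_pi.2 fun i => (continuous_apply (Fin.castAdd p i)).comp_continuousOn h.2.1,
    fun i => h.2.2 (Fin.castAdd p i)⟩

lemma IsCBV.sndPath (h : IsCBV T (pairSet S W) AB) : IsCBV T W (sndPath AB) :=
  ⟨fun t ht => (h.1 t ht).2,
    continuousOn_pi.2 fun i => (continuous_apply (Fin.natAdd m i)).comp_continuousOn h.2.1,
    fun i => h.2.2 (Fin.natAdd m i)⟩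

end PairedPaths

section Stieltjes

instance StieltjesFunction.isFiniteMeasure_restrict_Ioc (f : StieltjesFunction ℝ) (s t : ℝ) :
    IsFiniteMeasure (f.measure.restrict (Ioc s t)) :=
  isFiniteMeasure_restrict.2 (by simp [StieltjesFunction.measure_Ioc])

lemma StieltjesFunction.measure_restrict_Ioc_congr {f f' : StieltjesFunction ℝ} {s t : ℝ}
    (h : EqOn f f' (Icc s t)) :
    f.measure.restrict (Ioc s t) = f'.measure.restrict (Ioc s t) := by
  have hIoc : ∀ a b, f.measure (Ioc a b ∩ Ioc s t) = f'.measure (Ioc a b ∩ Ioc s t) := by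
    intro a b
    rw [Ioc_inter_Ioc]
    by_cases hab : a ⊔ s < b ⊓ t
    · rw [StieltjesFunction.measure_Ioc, StieltjesFunction.measure_Ioc,
        h ⟨le_sup_right, hab.le.trans inf_le_right⟩,
        h ⟨le_sup_right.trans hab.le, inf_le_right⟩]
    · rw [Ioc_eq_empty hab, measure_empty, measure_empty]
  refine Measure.ext_of_Ioc_finite _ _ ?_ fun a b _ => ?_
  · simpa only [Measure.restrict_apply_univ, inter_self] using hIoc s t
  · simpa only [Measure.restrict_apply measurableSet_Ioc] using hIoc a b

lemma exists_stieltjesFunction_sub_eqOn {a b : ℝ} (hab : a ≤ b) {f : ℝ → ℝ}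
    (hf : ContinuousOn f (Icc a b)) (hbv : BoundedVariationOn f (Icc a b)) :
    ∃ p n : StieltjesFunction ℝ, ∀ r ∈ Icc a b, f r = p r - n r := by
  set c : ℝ → ℝ := fun r => max a (min r b)
  have hc_mono : Monotone c := fun x y hxy => max_le_max le_rfl (min_le_min hxy le_rfl)
  have hc_mem : ∀ r, c r ∈ Icc a b := fun r => ⟨le_max_left _ _, max_le hab (min_le_right _ _)⟩
  have hc_eq : ∀ r ∈ Icc a b, c r = r := fun r hr => by
    simp only [c, min_eq_left hr.2, max_eq_right hr.1]
  have hfc : Continuous (fun r => f (c r)) :=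
    hf.comp_continuous (continuous_const.max (continuous_id.min continuous_const)) hc_mem
  have hloc := hbv.locallyBoundedVariationOn
  have ha : a ∈ Icc a b := ⟨le_rfl, hab⟩
  set q : ℝ → ℝ := fun r => variationOnFromTo f (Icc a b) a (c r)
  have hq : Monotone q := fun x y hxy =>
    variationOnFromTo.monotoneOn hloc ha (hc_mem x) (hc_mem y) (hc_mono hxy)
  have hq' : Monotone fun r => q r - f (c r) := fun x y hxy =>
    variationOnFromTo.sub_self_monotoneOn hloc ha (hc_mem x) (hc_mem y) (hc_mono hxy)
  refine ⟨hq.stieltjesFunction, hq'.stieltjesFunction, fun r hr => ?_⟩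
  have hlim := (hq.stieltjesFunction_eq r ▸ hq.tendsto_rightLim r).sub
    (hq'.stieltjesFunction_eq r ▸ hq'.tendsto_rightLim r)
  simp only [sub_sub_cancel] at hlim
  have := tendsto_nhds_unique ((hfc.tendsto r).mono_left nhdsWithin_le_nhds) hlim
  rwa [hc_eq r hr] at this

/-- The value of a Lebesgue–Stieltjes integral does not depend on the Jordan-type decomposition
`A = P - N` used to define it, so it can be bounded through any other decomposition `p - n`. -/
lemma IsLSIntegral.abs_le {g A : ℝ → ℝ} {s t I C : ℝ} (hI : IsLSIntegral g A s t I)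
    (hst : s ≤ t) {p n : StieltjesFunction ℝ} (hA : ∀ r ∈ Icc s t, A r = p r - n r)
    (hmeas : Measurable fun r : Icc s t => g r) (hg : ∀ r ∈ Ioc s t, |g r| ≤ C) :
    |I| ≤ C * ((p t - p s) + (n t - n s)) := by
  obtain ⟨P, N, hPN, -, -, rfl⟩ := hI
  have hbound : ∀ f : StieltjesFunction ℝ, ∀ᵐ r ∂f.measure.restrict (Ioc s t), ‖g r‖ ≤ C :=
    fun f => (ae_restrict_iff' measurableSet_Ioc).2 (Eventually.of_forall hg)
  have hint : ∀ f : StieltjesFunction ℝ, Integrable g (f.measure.restrict (Ioc s t)) := by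
    intro f
    have hg_meas : AEStronglyMeasurable g (f.measure.restrict (Ioc s t)) :=
      (((aemeasurable_restrict_iff_comap_subtype measurableSet_Icc).2
        hmeas.aemeasurable).mono_set Ioc_subset_Icc_self).aestronglyMeasurable
    exact Integrable.of_bound hg_meas C (hbound f)
  have habs : ∀ f : StieltjesFunction ℝ, |∫ r in Ioc s t, g r ∂f.measure| ≤ C * (f t - f s) := by
    intro f
    simpa [measureReal_def, StieltjesFunction.measure_Ioc,
      ENNReal.toReal_ofReal (sub_nonneg.2 (f.mono hst))] using
      norm_integral_le_of_norm_le_const (hbound f)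
  have hmeasure : P.measure.restrict (Ioc s t) + n.measure.restrict (Ioc s t)
      = N.measure.restrict (Ioc s t) + p.measure.restrict (Ioc s t) := by
    simp only [← Measure.restrict_add, ← StieltjesFunction.measure_add]
    refine StieltjesFunction.measure_restrict_Ioc_congr fun r hr => ?_
    simp only [StieltjesFunction.add_apply]
    linarith [hPN r hr, hA r hr]
  have hswap := congrArg (fun μ => ∫ r, g r ∂μ) hmeasure
  simp only [integral_add_measure (hint _) (hint _)] at hswap
  rw [intervalIntegral.integral_of_le hst, intervalIntegral.integral_of_le hst]
  calc |(∫ r in Ioc s t, g r ∂P.measure) - ∫ r in Ioc s t, g r ∂N.measure|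
      = |(∫ r in Ioc s t, g r ∂p.measure) - ∫ r in Ioc s t, g r ∂n.measure| := by
        congr 1; linarith
    _ ≤ |∫ r in Ioc s t, g r ∂p.measure| + |∫ r in Ioc s t, g r ∂n.measure| := abs_sub _ _
    _ ≤ C * ((p t - p s) + (n t - n s)) := by linarith [habs p, habs n]

end Stieltjes

section Functionals

variable {d m : ℕ} {T : ℝ} {U : Set (Fin d → ℝ)} {S : Set (Fin m → ℝ)} {F : Fnl d m}
  {X Y : FPath d} {A : FPath m}

lemma supDist_le {c : ℝ} (hc : 0 ≤ c) (h : ∀ w ∈ Icc 0 T, ‖X w - Y w‖ ≤ c) :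
    supDist T X Y ≤ c :=
  Real.iSup_le (fun w => h w.1 w.2) hc

lemma NonAnticipative.apply_stopped (hF : NonAnticipative T U S F) {t : ℝ} (ht : t ∈ Icc 0 T)
    (hX : IsCadlag T U X) (hA : IsCBV T S A) : F t X A = F t (stopped X t) A := by
  rw [hF t ht X hX A hA, hF t ht _ (hX.stopped ht) A hA, stopped_stopped]

lemma NonAnticipative.apply_vertPerturb_of_lt (hF : NonAnticipative T U S F) {s t : ℝ}
    (hs : s ∈ Icc 0 T) (hst : s < t) {v : Fin d → ℝ} (hX : IsCadlag T U X)
    (hXv : IsCadlag T U (vertPerturb t X v)) (hA : IsCBV T S A) :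
    F s (vertPerturb t X v) A = F s X A := by
  rw [hF.apply_stopped hs hXv hA, hF.apply_stopped hs hX hA, stopped_vertPerturb_of_lt hst]

lemma ContInXLocUnifT.apply_eq_of_eqOn (hF : ContInXLocUnifT T U S F) {t : ℝ}
    (ht : t ∈ Icc 0 T) (hX : IsCadlag T U X) (hY : IsCadlag T U Y) (hA : IsCBV T S A)
    (hXY : EqOn X Y (Icc 0 T)) : F t X A = F t Y A := by
  by_contra hne
  obtain ⟨η, hη, hFη⟩ := hF _ (abs_pos.2 (sub_ne_zero.2 hne)) t ht X hX A hA
  have hsup : supDist T X Y < η :=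
    (supDist_le le_rfl fun w hw => by simp [hXY hw]).trans_lt hη
  exact lt_irrefl _ (hFη t ht Y hY hsup (by simpa using hη))

lemma eventually_supDist_stopped_lt (hX : IsCadlag T U X) {u : ℝ} (hu : u ∈ Ico 0 T)
    {η : ℝ} (hη : 0 < η) : ∀ᶠ s in 𝓝[>] u, supDist T (stopped X u) (stopped X s) < η := by
  obtain ⟨δ, hδ, hXδ⟩ := Metric.tendsto_nhdsWithin_nhds.1 (hX.2.1 u hu) (η / 2) (half_pos hη)
  filter_upwards [Ioo_mem_nhdsGT (lt_add_of_pos_right u hδ)] with s hs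
  refine (supDist_le (half_pos hη).le fun w _ => ?_).trans_lt (half_lt_self hη)
  simp only [stopped]
  rcases le_or_gt w u with hwu | huw
  · rw [min_eq_right hwu, min_eq_right (hwu.trans hs.1.le), sub_self, norm_zero]
    positivity
  · have hr : u < min s w := lt_min hs.1 huw
    rw [min_eq_left huw.le, ← dist_eq_norm, dist_comm]
    refine (hXδ hr ?_).le
    rw [Real.dist_eq, abs_of_pos (sub_pos.2 hr)]
    linarith [min_le_left s w, hs.2]

lemma supDist_stopped_leftStopped_le {s u c : ℝ} (hsu : s < u) {L : Fin d → ℝ}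
    (hc : ∀ r ∈ Ico s u, ‖X r - L‖ ≤ c) :
    supDist T (stopped (leftStopped X u L) u) (stopped X s) ≤ 2 * c := by
  have hXs := hc s ⟨le_rfl, hsu⟩
  have hc0 : 0 ≤ c := (norm_nonneg _).trans hXs
  refine supDist_le (by positivity) fun w _ => ?_
  simp only [stopped, leftStopped]
  rcases lt_or_ge w s with hws | hsw
  · rw [min_eq_right (hws.trans hsu).le, min_eq_right hws.le, if_pos (hws.trans hsu),
      sub_self, norm_zero]
    positivity
  rw [min_eq_left hsw]
  rcases lt_or_ge w u with hwu | huw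
  · rw [min_eq_right hwu.le, if_pos hwu, ← sub_sub_sub_cancel_right _ _ L]
    exact (norm_sub_le _ _).trans (by linarith [hc w ⟨hsw, hwu⟩])
  · rw [min_eq_left huw, if_neg (lt_irrefl u), norm_sub_rev]
    linarith

lemma ContInXLocUnifT.tendsto_sub_stopped (hF : ContInXLocUnifT T U S F) (hX : IsCadlag T U X)
    (hA : IsCBV T S A) {u : ℝ} (hu : u ∈ Ico 0 T) :
    Tendsto (fun s => F s (stopped X s) A - F s (stopped X u) A) (𝓝[>] u) (𝓝 0) := by
  rw [Metric.tendsto_nhds]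
  intro ε hε
  have huT : u ∈ Icc 0 T := Ico_subset_Icc_self hu
  obtain ⟨η, hη, hFη⟩ := hF ε hε u huT (stopped X u) (hX.stopped huT) A hA
  filter_upwards [eventually_supDist_stopped_lt hX hu hη,
    Ioo_mem_nhdsGT (lt_min hu.2 (lt_add_of_pos_right u hη))] with s hsup hs
  have hsT : s ∈ Icc 0 T := ⟨hu.1.trans hs.1.le, hs.2.le.trans (min_le_left _ _)⟩
  rw [Real.dist_eq, sub_zero, abs_sub_comm]
  refine hFη s hsT (stopped X s) (hX.stopped hsT) hsup ?_
  rw [abs_sub_comm, abs_of_pos (sub_pos.2 hs.1)]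
  linarith [hs.2.trans_le (min_le_right _ _)]

end Functionals

section TimeRegularity

variable {d m : ℕ} {T : ℝ} {U : Set (Fin d → ℝ)} {S : Set (Fin m → ℝ)} {F : Fnl d m}
  {X : FPath d} {A : FPath m}

lemma IsCBV.exists_timeAug_eq_sub (hA : IsCBV T S A) (hT : 0 ≤ T) (i : Fin (m + 1)) :
    ∃ p n : StieltjesFunction ℝ, ∀ r ∈ Icc 0 T, timeAug A r i = p r - n r := by
  induction i using Fin.cases with
  | zero => exact ⟨StieltjesFunction.id, StieltjesFunction.const ℝ 0, fun r _ => by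
      simp [timeAug, StieltjesFunction.id, StieltjesFunction.const]⟩
  | succ k =>
    simpa [timeAug] using exists_stieltjesFunction_sub_eqOn hT
      ((continuous_apply k).comp_continuousOn hA.2.1) (hA.2.2 k)

lemma HasHorizDeriv.tendsto_apply_stopped {HD : Fin (m + 1) → Fnl d m}
    (hF : HasHorizDeriv T U S F HD) (hX : IsCadlag T U X) (hA : IsCBV T S A) {u : ℝ}
    (hu : u ∈ Ico 0 T) :
    Tendsto (fun s => F s (stopped X u) A) (𝓝[>] u) (𝓝 (F u (stopped X u) A)) := by
  have huT : u ∈ Icc 0 T := Ico_subset_Icc_self hu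
  set K := closure (X '' Icc 0 T)
  have hXuK : IsCadlag T K (stopped X u) := hX.to_closure_image.stopped huT
  choose p n hpn using hA.exists_timeAug_eq_sub (hu.1.trans hu.2.le)
  choose C hC using fun i => hF.2.1 i A hA K hX.closure_image_subset hX.isCompact_closure_image
  set M : ℝ → ℝ := fun s => ∑ i, C i * ((p i s - p i u) + (n i s - n i u))
  have hM : Tendsto M (𝓝[>] u) (𝓝 0) := by
    have hlim : ∀ q : StieltjesFunction ℝ, Tendsto (fun s => q s - q u) (𝓝[>] u) (𝓝 0) :=
      fun q => by
        simpa using ((q.right_continuous u).mono_left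
          (nhdsWithin_mono _ Ioi_subset_Ici_self)).sub_const (q u)
    simpa using tendsto_finsetSum Finset.univ fun i _ =>
      ((hlim (p i)).add (hlim (n i))).const_mul (C i)
  have hbound : ∀ s ∈ Ioc u T, |F s (stopped X u) A - F u (stopped X u) A| ≤ M s := by
    intro s hs
    obtain ⟨hmeas, I, hI, hsum⟩ := hF.2.2 u s hu.1 hs.1 hs.2 X hX A hA
    rw [hsum]
    refine (Finset.abs_sum_le_sum_abs _ _).trans (Finset.sum_le_sum fun i _ => ?_)
    refine (hI i).abs_le hs.1.le (fun r hr => hpn i r ⟨hu.1.trans hr.1, hr.2.trans hs.2⟩)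
      (hmeas i) fun r hr => hC i r ⟨hu.1.trans hr.1.le, hr.2.trans hs.2⟩ _ hXuK
  rw [← tendsto_sub_nhds_zero_iff]
  refine squeeze_zero_norm' ?_ hM
  filter_upwards [Ioc_mem_nhdsGT hu.2] with s hs
  exact hbound s hs

lemma C12c.tendsto_nhdsGT (hF : C12c T U S F) (hX : IsCadlag T U X) (hA : IsCBV T S A) {u : ℝ}
    (hu : u ∈ Ico 0 T) : Tendsto (fun s => F s X A) (𝓝[>] u) (𝓝 (F u X A)) := by
  obtain ⟨HD, hHD, -⟩ := hF.1.horiz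
  have hsplit : (fun s => F s X A) =ᶠ[𝓝[>] u]
      fun s => (F s (stopped X s) A - F s (stopped X u) A) + F s (stopped X u) A := by
    filter_upwards [Ioc_mem_nhdsGT hu.2] with s hs
    rw [sub_add_cancel, hF.1.nonanticip.apply_stopped ⟨hu.1.trans hs.1.le, hs.2⟩ hX hA]
  rw [tendsto_congr' hsplit, hF.1.nonanticip.apply_stopped (Ico_subset_Icc_self hu) hX hA,
    ← zero_add (F u (stopped X u) A)]
  exact (hF.2.1.tendsto_sub_stopped hX hA hu).add (hHD.tendsto_apply_stopped hX hA hu)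

lemma LeftCont.tendsto_nhdsLT (hF : LeftCont T U S F) (hX : IsCadlag T U X) (hA : IsCBV T S A)
    {u : ℝ} (hu : u ∈ Ioc 0 T) {L : Fin d → ℝ} (hL : L ∈ U)
    (hXL : Tendsto X (𝓝[<] u) (𝓝 L)) :
    Tendsto (fun s => F s X A) (𝓝[<] u) (𝓝 (F u (leftStopped X u L) A)) := by
  rw [Metric.tendsto_nhds]
  intro ε hε
  obtain ⟨η, hη, hFη⟩ := hF u hu ε hε _ (hX.leftStopped u hL) A hA
  obtain ⟨δ, hδ, hXδ⟩ := Metric.tendsto_nhdsWithin_nhds.1 hXL (η / 3) (by positivity)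
  have hnear : ∀ r ∈ Ioo (u - δ) u, ‖X r - L‖ < η / 3 := fun r hr => by
    rw [← dist_eq_norm]
    exact hXδ hr.2 (by rw [Real.dist_eq, abs_of_neg (sub_neg.2 hr.2)]; linarith [hr.1])
  filter_upwards [Ioo_mem_nhdsLT (sub_lt_self u (lt_min hη hδ))] with s hs
  have hsδ : s ∈ Ioo (u - δ) u := ⟨by linarith [hs.1, min_le_right η δ], hs.2⟩
  have hsup : supDist T (stopped (leftStopped X u L) u) (stopped X (u - (u - s))) < η := by
    rw [sub_sub_cancel]
    refine (supDist_stopped_leftStopped_le hs.2 fun r hr => ?_).trans_lt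
      (by linarith : 2 * (η / 3) < η)
    exact (hnear r ⟨hsδ.1.trans_le hr.1, hr.2⟩).le
  have hF' := hFη (u - s) ⟨sub_nonneg.2 hs.2.le, by linarith [hs.1, min_le_left η δ]⟩ X hX hsup
  rwa [sub_sub_cancel, abs_sub_comm, ← Real.dist_eq] at hF'

lemma isCadlag_fun_apply {ν : ℕ} {V : Set (Fin ν → ℝ)} {F : Fin ν → Fnl d m}
    (hF : ∀ ℓ, C12c T U S (F ℓ))
    (hFV : ∀ t ∈ Icc (0:ℝ) T, ∀ X, IsCadlag T U X → ∀ A, IsCBV T S A → (fun ℓ => F ℓ t X A) ∈ V)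
    (hX : IsCadlag T U X) (hA : IsCBV T S A) : IsCadlag T V (fun u ℓ => F ℓ u X A) := by
  refine ⟨fun t ht => hFV t ht X hX A hA,
    fun u hu => tendsto_pi_nhds.2 fun ℓ => (hF ℓ).tendsto_nhdsGT hX hA hu, fun u hu => ?_⟩
  obtain ⟨L, hL, hXL⟩ := hX.2.2 u hu
  exact ⟨fun ℓ => F ℓ u (leftStopped X u L) A, hFV u (Ioc_subset_Icc_self hu) _
    (hX.leftStopped u hL) A hA,
    tendsto_pi_nhds.2 fun ℓ => (hF ℓ).1.leftCont.tendsto_nhdsLT hX hA hu hL hXL⟩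

end TimeRegularity

section VerticalDifferentiability

variable {d m : ℕ} {T : ℝ} {U : Set (Fin d → ℝ)} {S : Set (Fin m → ℝ)} {F : Fnl d m}
  {X : FPath d} {A : FPath m} {t : ℝ}

lemma C12b.eventually_differentiableAt_vertPerturb (hF : C12b T U S F) (hU : IsOpen U)
    (ht : t ∈ Icc 0 T) (hX : IsCadlag T U X) (hA : IsCBV T S A) :
    ∀ᶠ v in 𝓝 0, DifferentiableAt ℝ (fun w => F t (vertPerturb t X w) A) v := by
  filter_upwards [hX.eventually_vertPerturb hU t] with v hXv
  exact (vertDiffAt_vertPerturb_iff F t X A v).1 (hF.vdiff t ht _ hXv A hA)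

lemma C12b.differentiableAt_fderiv_vertPerturb (hF : C12b T U S F) (ht : t ∈ Icc 0 T)
    (hX : IsCadlag T U X) (hA : IsCBV T S A) (j : Fin d) :
    DifferentiableAt ℝ
      (fun v => fderiv ℝ (fun w => F t (vertPerturb t X w) A) v (Pi.single j 1)) 0 := by
  simpa only [VertDiffAt, vertD_vertPerturb] using hF.vdiff2 j t ht X hX A hA

end VerticalDifferentiability

section ChainRule

variable {d m ν p : ℕ} {T : ℝ} {U : Set (Fin d → ℝ)} {S : Set (Fin m → ℝ)}
  {V : Set (Fin ν → ℝ)} {W : Set (Fin p → ℝ)} {F : Fin ν → Fnl d m} {G : Fnl ν p}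
  {X : FPath d} {A : FPath m} {B : FPath p} {t : ℝ}

lemma comp_vertPerturb_eventuallyEq (hF : ∀ ℓ, C12c T U S (F ℓ))
    (hFV : ∀ t ∈ Icc (0:ℝ) T, ∀ X, IsCadlag T U X → ∀ A, IsCBV T S A → (fun ℓ => F ℓ t X A) ∈ V)
    (hG : C12c T V W G) (hU : IsOpen U) (hV : IsOpen V) (ht : t ∈ Icc 0 T)
    (hX : IsCadlag T U X) (hA : IsCBV T S A) (hB : IsCBV T W B) :
    (fun v => G t (fun u ℓ => F ℓ u (vertPerturb t X v) A) B) =ᶠ[𝓝 0]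
      fun v => G t (vertPerturb t (fun u ℓ => F ℓ u X A)
        (fun ℓ => F ℓ t (vertPerturb t X v) A - F ℓ t X A)) B := by
  set q : (Fin d → ℝ) → Fin ν → ℝ := fun v ℓ => F ℓ t (vertPerturb t X v) A - F ℓ t X A
  have hq : Tendsto q (𝓝 0) (𝓝 0) := by
    have hq0 : q 0 = 0 := funext fun ℓ => by simp [q, vertPerturb_zero]
    refine hq0 ▸ (continuousAt_pi.2 fun ℓ => ?_).tendsto
    exact ((hF ℓ).1.eventually_differentiableAt_vertPerturb hU ht hX hA).self_of_nhds
      |>.continuousAt.sub_const _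
  have hY := isCadlag_fun_apply hF hFV hX hA
  filter_upwards [hX.eventually_vertPerturb hU t,
    hq.eventually (hY.eventually_vertPerturb hV t)] with v hXv hZ
  have hYv := isCadlag_fun_apply hF hFV hXv hA
  rw [hG.1.nonanticip.apply_stopped ht hYv hB, hG.1.nonanticip.apply_stopped ht hZ hB]
  refine hG.2.1.apply_eq_of_eqOn ht (hYv.stopped ht) (hZ.stopped ht) hB fun s hs => ?_
  funext ℓ
  simp only [stopped, vertPerturb]
  rcases lt_or_ge s t with hst | hts
  · rw [min_eq_right hst.le, if_neg (not_le.2 hst)]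
    exact (hF ℓ).1.nonanticip.apply_vertPerturb_of_lt hs hst hX hXv hA
  · simp [min_eq_left hts, q]

theorem fderiv_fderiv_comp_vertPerturb (hF : ∀ ℓ, C12c T U S (F ℓ))
    (hFV : ∀ t ∈ Icc (0:ℝ) T, ∀ X, IsCadlag T U X → ∀ A, IsCBV T S A → (fun ℓ => F ℓ t X A) ∈ V)
    (hG : C12c T V W G) (hU : IsOpen U) (hV : IsOpen V) (ht : t ∈ Icc 0 T)
    (hX : IsCadlag T U X) (hA : IsCBV T S A) (hB : IsCBV T W B) (i j : Fin d) :
    fderiv ℝ (fun v => fderiv ℝ (fun w => G t (fun u ℓ => F ℓ u (vertPerturb t X w) A) B) v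
        (Pi.single i 1)) 0 (Pi.single j 1)
      = ∑ ℓ, ((∑ k, vertD2 G t (fun u ℓ' => F ℓ' u X A) B ℓ k
                * vertD (F ℓ) t X A i * vertD (F k) t X A j)
             + vertD G t (fun u ℓ' => F ℓ' u X A) B ℓ * vertD2 (F ℓ) t X A j i) := by
  set Y : FPath ν := fun u ℓ => F ℓ u X A
  set q : (Fin d → ℝ) → Fin ν → ℝ := fun v ℓ => F ℓ t (vertPerturb t X v) A - F ℓ t X A
  have hq0 : q 0 = 0 := funext fun ℓ => by simp [q, vertPerturb_zero]
  have hY : IsCadlag T V Y := isCadlag_fun_apply hF hFV hX hA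
  have hq : ∀ᶠ v in 𝓝 0, DifferentiableAt ℝ q v := by
    filter_upwards [eventually_all.2 fun ℓ =>
      (hF ℓ).1.eventually_differentiableAt_vertPerturb hU ht hX hA] with v hv
    exact differentiableAt_pi.2 fun ℓ => (hv ℓ).sub_const _
  have hq2 : ∀ ℓ i, DifferentiableAt ℝ
      (fun v => fderiv ℝ (fun w => q w ℓ) v (Pi.single i 1)) 0 := fun ℓ i => by
    simpa only [q, fderiv_sub_const] using (hF ℓ).1.differentiableAt_fderiv_vertPerturb ht hX hA i
  have hg := hG.1.eventually_differentiableAt_vertPerturb hV ht hY hB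
  have hg2 := hG.1.differentiableAt_fderiv_vertPerturb ht hY hB
  rw [← hq0] at hg hg2
  have key := comp_vertPerturb_eventuallyEq hF hFV hG hU hV ht hX hA hB
  have key' : (fun v => fderiv ℝ (fun w => G t (fun u ℓ => F ℓ u (vertPerturb t X w) A) B) v
      (Pi.single i 1)) =ᶠ[𝓝 0] fun v => fderiv ℝ (fun w => G t (vertPerturb t Y (q w)) B) v
      (Pi.single i 1) :=
    (key.fderiv (𝕜 := ℝ)).mono fun v hv => congrArg (· (Pi.single i 1)) hv
  rw [key'.fderiv_eq]
  refine (fderiv_fderiv_comp_apply_single hq hq2 hg hg2 i j).trans ?_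
  simp only [hq0, q, fderiv_sub_const, vertD2_eq_fderiv_fderiv]
  rfl

theorem chain_rule_second_order_general
    {d ν m p : ℕ} {T : ℝ}
    {U : Set (Fin d → ℝ)} (hU : IsOpen U) {V : Set (Fin ν → ℝ)} (hV : IsOpen V)
    {S : Set (Fin m → ℝ)} {W : Set (Fin p → ℝ)}
    (F : Fin ν → Fnl d m) (hF : ∀ ℓ, C12c T U S (F ℓ))
    (hFV : ∀ t ∈ Set.Icc (0:ℝ) T, ∀ X, IsCadlag T U X → ∀ A, IsCBV T S A →
      (fun ℓ => F ℓ t X A) ∈ V)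
    (G : Fnl ν p) (hG : C12c T V W G) :
    ∀ t ∈ Set.Icc (0:ℝ) T, ∀ X, IsCadlag T U X →
    ∀ AB, IsCBV T (pairSet S W) AB → ∀ i j : Fin d,
      vertD2 (fun t' X' AB' => G t' (fun u ℓ => F ℓ u X' (fstPath AB')) (sndPath AB'))
          t X AB j i
        = ∑ ℓ,
            ((∑ k, vertD2 G t (fun u ℓ' => F ℓ' u X (fstPath AB)) (sndPath AB) ℓ k
                * vertD (F ℓ) t X (fstPath AB) i * vertD (F k) t X (fstPath AB) j)
             + vertD G t (fun u ℓ' => F ℓ' u X (fstPath AB)) (sndPath AB) ℓ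
                * vertD2 (F ℓ) t X (fstPath AB) j i) := by
  intro t ht X hX AB hAB i j
  rw [vertD2_eq_fderiv_fderiv]
  exact fderiv_fderiv_comp_vertPerturb hF hFV hG hU hV ht hX hAB.fstPath hAB.sndPath i j

/-- **Lemma 3.4 (chain rule): second-order vertical derivatives.**
`∂_{ji}H = Σ_ℓ ( Σ_k ∂_{ℓk}G ∂_iF_ℓ ∂_jF_k + ∂_ℓG ∂_{ji}F_ℓ )`. -/
theorem chain_rule_second_order
    {d ν m p : ℕ} {T : ℝ} (hT : 0 < T)
    {U : Set (Fin d → ℝ)} (hU : IsOpen U) {V : Set (Fin ν → ℝ)} (hV : IsOpen V)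
    {S : Set (Fin m → ℝ)} (hS : IsOpen S) {W : Set (Fin p → ℝ)} (hW : IsOpen W)
    (F : Fin ν → Fnl d m) (hF : ∀ ℓ, C12c T U S (F ℓ))
    (hFV : ∀ t ∈ Set.Icc (0:ℝ) T, ∀ X, IsCadlag T U X → ∀ A, IsCBV T S A →
      (fun ℓ => F ℓ t X A) ∈ V)
    (G : Fnl ν p) (hG : C12c T V W G) :
    ∀ t ∈ Set.Icc (0:ℝ) T, ∀ X, IsCadlag T U X →
    ∀ AB, IsCBV T (pairSet S W) AB → ∀ i j : Fin d,
      vertD2 (fun t' X' AB' => G t' (fun u ℓ => F ℓ u X' (fstPath AB')) (sndPath AB'))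
          t X AB j i
        = ∑ ℓ,
            ((∑ k, vertD2 G t (fun u ℓ' => F ℓ' u X (fstPath AB)) (sndPath AB) ℓ k
                * vertD (F ℓ) t X (fstPath AB) i * vertD (F k) t X (fstPath AB) j)
             + vertD G t (fun u ℓ' => F ℓ' u X (fstPath AB)) (sndPath AB) ℓ
                * vertD2 (F ℓ) t X (fstPath AB) j i) :=
  chain_rule_second_order_general hU hV F hF hFV G hG
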